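/- arXiv:1306.3123 — 2 statements merged into one kernel-verified Lean document; each statement's English description precedes it below -/
import Mathlib

section
/- For every function f : ℕ → ℕ there exists a uniformly recurrent infinite word u (over a two-letter alphabet {a,b}) such that h_u(d) > f(d) for infinitely many positive integers d. -/
open scoped BigOperators ENNReal

namespace PeriodicityComplexity

variable {A : Type*}

/-- The finite word `z` occurs in the infinite word `w` at the (0-based) index `j`,
i.e. `z` occupies positions `j+1, …, j+|z|` of `w`. -/
def OccursAt (w : ℕ → A) (z : List A) (j : ℕ) : Prop :=
  z = List.ofFn (fun t : Fin z.length => w (j + t))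

/-- `z` is a (finite) factor of the infinite word `w`. -/
def IsFactor (w : ℕ → A) (z : List A) : Prop := ∃ j, OccursAt w z j

/-- An infinite word is uniformly recurrent if every factor occurs with bounded gaps. -/
def UniformlyRecurrent (w : ℕ → A) : Prop :=
  ∀ z : List A, IsFactor w z → ∃ N : ℕ, ∀ j : ℕ, ∃ t, j ≤ t ∧ t < j + N ∧ OccursAt w z t

/-- An infinite word is periodic if some `p ≥ 1` is a period of all of it. -/
def Periodic (w : ℕ → A) : Prop := ∃ p : ℕ, 1 ≤ p ∧ ∀ i, w (i + p) = w i

/-- An infinite word is ultimately periodic if some `p ≥ 1` is a period from some point on. -/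
def UltimatelyPeriodic (w : ℕ → A) : Prop :=
  ∃ p : ℕ, 1 ≤ p ∧ ∃ N : ℕ, ∀ i, N ≤ i → w (i + p) = w i

/-- The `e`-fold concatenation `v^e` of a finite word `v`. -/
def wpow (v : List A) (e : ℕ) : List A := (List.replicate e v).flatten

/-- The prefix of length `i` of an infinite word. -/
def wordPrefix (w : ℕ → A) (i : ℕ) : List A := List.ofFn (fun t : Fin i => w t)

/-- `r` is a repetition word at position `i` of the infinite word `w` (`w = uv`, `|u| = i`):
`r` is nonempty, suffix-comparable with `u`, and a prefix of the infinite remainder `v`. -/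
def IsRepWordAt (w : ℕ → A) (i : ℕ) (r : List A) : Prop :=
  r ≠ [] ∧ (r <:+ wordPrefix w i ∨ wordPrefix w i <:+ r) ∧ OccursAt w r i

/-- Local period of an infinite word at position `i`, as an extended nonnegative real
(`⊤` if there is no repetition word at that position). -/
noncomputable def localPeriod (w : ℕ → A) (i : ℕ) : ℝ≥0∞ :=
  sInf ((fun r : List A => (r.length : ℝ≥0∞)) '' {r | IsRepWordAt w i r})

/-- Periodicity complexity `h_w(i) = (1/i) ∑_{j=1}^{i} p_w(j)` of an infinite word. -/
noncomputable def pcomplexity (w : ℕ → A) (i : ℕ) : ℝ≥0∞ :=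
  (∑ j ∈ Finset.Icc 1 i, localPeriod w j) / (i : ℝ≥0∞)

/-- `r` is a repetition word at position `i` of the finite word `v` (`v = xy`, `|x| = i`):
`r` is nonempty, suffix-comparable with `x` and prefix-comparable with `y`. -/
def IsRepWordAtF (v : List A) (i : ℕ) (r : List A) : Prop :=
  r ≠ [] ∧ (r <:+ v.take i ∨ v.take i <:+ r) ∧ (r <+: v.drop i ∨ v.drop i <+: r)

/-- Local period of a finite word at position `i`. -/
noncomputable def localPeriodF (v : List A) (i : ℕ) : ℕ :=
  sInf {n : ℕ | ∃ r : List A, IsRepWordAtF v i r ∧ r.length = n}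

/-- Average local period `h(v) = (1/|v|) ∑_{i=1}^{|v|} p_v(i)` of a finite word. -/
noncomputable def hF (v : List A) : ℝ :=
  (∑ i ∈ Finset.Icc 1 v.length, (localPeriodF v i : ℝ)) / (v.length : ℝ)

/-- An infinite word is of bounded repetition if the exponents of powers of nonempty
words occurring in it are bounded. -/
def BoundedRepetition (w : ℕ → A) : Prop :=
  ∃ E : ℕ, ∀ (v : List A) (e : ℕ), v ≠ [] → IsFactor w (wpow v e) → e ≤ E

/-- `p` is a period of the finite word `z`. -/
def HasPeriodF (z : List A) (p : ℕ) : Prop :=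
  ∀ t : ℕ, t + p < z.length → z[t]? = z[t + p]?

/-- The (least) period of a finite word. -/
noncomputable def periodF (z : List A) : ℕ := sInf {p : ℕ | 1 ≤ p ∧ HasPeriodF z p}

/-- `r` is a return word to `z` in the infinite word `w`: `r` is the factor of `w` between
two consecutive occurrences of `z`. -/
def IsReturnWord (w : ℕ → A) (z r : List A) : Prop :=
  r ≠ [] ∧ ∃ j : ℕ, OccursAt w z j ∧ OccursAt w z (j + r.length) ∧
    (∀ t, j < t → t < j + r.length → ¬ OccursAt w z t) ∧ OccursAt w r j

/-- `l` is the length of some return word to `z` in `w`. -/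
def IsReturnLength (w : ℕ → A) (z : List A) (l : ℕ) : Prop :=
  ∃ r : List A, IsReturnWord w z r ∧ r.length = l

/-- The maximal return time of `z` in `w`. -/
noncomputable def maxReturnTime (w : ℕ → A) (z : List A) : ℕ :=
  sSup {l : ℕ | IsReturnLength w z l}

/-- A finite word is unbordered if no proper nonempty prefix of it is also a suffix. -/
def Unbordered (z : List A) : Prop :=
  ∀ b : List A, b ≠ [] → b.length < z.length → b <+: z → ¬ b <:+ z

/-- A finite word is primitive if it is not a (trivial or nontrivial) power of a word
other than itself. -/
def Primitive (z : List A) : Prop :=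
  ∀ (v : List A) (k : ℕ), z = wpow v k → k = 1

/-- A finite word is Lyndon if it is primitive and lexicographically minimal among its
conjugates: `z ≤ yx` for every factorization `z = xy`. -/
def IsLyndon [LinearOrder A] (z : List A) : Prop :=
  Primitive z ∧ ∀ x y : List A, z = x ++ y → z ≤ y ++ x

end PeriodicityComplexity

open PeriodicityComplexity

/-!
The word is `σ₀ σ₁ σ₂ ⋯ (1)` for the substitutions `σₖ : x ↦ 1 1 0 x x̄ 0 ⋯ 0` of length `Qₖ`,
hence a concatenation of level-`k` blocks `σ₀ ⋯ σₖ₋₁ (x)` of length `qₖ = Q₀ ⋯ Qₖ₋₁`. As `1 1`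
occurs in `σₖ (x)` only at its start, a factor of length `2 qₖ` read at a boundary of level `k + 1`
occurs only at such boundaries (recognizability). Hence at `d = 4 qₖ` no square of length at most
`d` is centred at `d`, and the prefix of length `d` does not recur before `qₖ₊₁`; so
`p(d) ≥ qₖ₊₁ = Qₖ qₖ`, and `Qₖ = 4 f(d) + 8` gives `h(d) ≥ p(d) / d > f(d)`. Uniform recurrence
holds because every pair of letters occurs in every `σₖ (x)`.
-/

namespace PeriodicityComplexity

variable {A : Type*} {w : ℕ → A}

theorem occursAt_iff {z : List A} {j : ℕ} :
    OccursAt w z j ↔ ∀ i (hi : i < z.length), z[i] = w (j + i) := by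
  simp [OccursAt, List.ext_getElem_iff]

theorem uniformlyRecurrent_of_forall_window
    (h : ∀ n j₀, ∃ N, ∀ j, ∃ t, j ≤ t ∧ t < j + N ∧ ∀ i < n, w (t + i) = w (j₀ + i)) :
    UniformlyRecurrent w := by
  rintro z ⟨j₀, hz⟩
  obtain ⟨N, hN⟩ := h z.length j₀
  refine ⟨N, fun j => ?_⟩
  obtain ⟨t, hjt, htN, ht⟩ := hN j
  exact ⟨t, hjt, htN, occursAt_iff.2 fun i hi => (occursAt_iff.1 hz i hi).trans (ht i hi).symm⟩

theorem IsRepWordAt.square_or_recurrence {i : ℕ} {r : List A} (hr : IsRepWordAt w i r) :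
    (0 < r.length ∧ r.length ≤ i ∧ ∀ t < r.length, w (i - r.length + t) = w (i + t)) ∨
      (i ≤ r.length ∧ ∀ t < i, w (r.length + t) = w t) := by
  obtain ⟨hne, ⟨s, hs⟩ | ⟨s, hs⟩, hocc⟩ := hr
  · have hlen : s.length + r.length = i := by simpa [wordPrefix] using congrArg List.length hs
    refine .inl ⟨List.length_pos_iff.2 hne, by omega, fun t ht => ?_⟩
    have := congrArg (·[s.length + t]?) hs
    simp only [List.getElem?_append_right (Nat.le_add_right _ _), Nat.add_sub_cancel_left,
      List.getElem?_eq_getElem ht, wordPrefix, List.getElem?_ofFn,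
      dif_pos (by omega : s.length + t < i), Option.some_inj] at this
    rw [show i - r.length = s.length by omega, ← this, occursAt_iff.1 hocc t ht]
  · have hlen : s.length + i = r.length := by simpa [wordPrefix] using congrArg List.length hs
    refine .inr ⟨by omega, fun t ht => ?_⟩
    have := congrArg (·[s.length + t]?) hs
    simp only [List.getElem?_append_right (Nat.le_add_right _ _), Nat.add_sub_cancel_left,
      List.getElem?_eq_getElem (by omega : s.length + t < r.length), wordPrefix,
      List.getElem?_ofFn, dif_pos ht, Option.some_inj] at this
    rw [this, occursAt_iff.1 hocc _ (by omega), show i + (s.length + t) = r.length + t by omega]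

theorem le_localPeriod {i L : ℕ} (h : ∀ r, IsRepWordAt w i r → L ≤ r.length) :
    (L : ℝ≥0∞) ≤ localPeriod w i :=
  le_sInf <| by rintro _ ⟨r, hr, rfl⟩; exact Nat.cast_le.2 (h r hr)

theorem natCast_lt_pcomplexity {i c : ℕ} (hi : 0 < i)
    (h : (((c + 1) * i : ℕ) : ℝ≥0∞) ≤ localPeriod w i) : (c : ℝ≥0∞) < pcomplexity w i := by
  have hi0 : (i : ℝ≥0∞) ≠ 0 := by exact_mod_cast hi.ne'
  calc (c : ℝ≥0∞) < c + 1 := ENNReal.lt_add_right (ENNReal.natCast_ne_top c) one_ne_zero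
    _ ≤ localPeriod w i / i := (ENNReal.le_div_iff_mul_le (.inl hi0)
      (.inl (ENNReal.natCast_ne_top i))).2 (by exact_mod_cast h)
    _ ≤ pcomplexity w i := ENNReal.div_le_div_right
      (Finset.single_le_sum (fun _ _ => zero_le) (Finset.mem_Icc.2 ⟨hi, le_rfl⟩)) _

end PeriodicityComplexity

namespace LargeLocalPeriod

variable (f : ℕ → ℕ)

def blockLen : ℕ → ℕ
  | 0 => 1
  | k + 1 => (4 * f (4 * blockLen k) + 8) * blockLen k

def patternLen (k : ℕ) : ℕ := 4 * f (4 * blockLen f k) + 8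

/-- `σₖ (x)` is the prefix of length `patternLen f k` of `pattern x`. -/
def pattern (x : Bool) : ℕ → Bool
  | 0 | 1 => true
  | 3 => x
  | 4 => !x
  | _ => false

/-- `letter f m` is the infinite word `σₘ σₘ₊₁ ⋯ (1)`: the level-`m` block of `word f` with
index `s` is `σ₀ ⋯ σₘ₋₁ (letter f m s)`. -/
def letter (m s : ℕ) : Bool :=
  if s = 0 then true
  else pattern (letter (m + 1) (s / patternLen f m)) (s % patternLen f m)
termination_by s
decreasing_by exact Nat.div_lt_self (Nat.pos_of_ne_zero ‹_›) (by unfold patternLen; omega)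

def word : ℕ → Bool := letter f 0

variable {f}

theorem blockLen_succ (k : ℕ) : blockLen f (k + 1) = patternLen f k * blockLen f k := rfl

theorem eight_le_patternLen (k : ℕ) : 8 ≤ patternLen f k := by unfold patternLen; omega

theorem blockLen_pos (k : ℕ) : 0 < blockLen f k := by
  induction k with
  | zero => exact Nat.one_pos
  | succ k ih => rw [blockLen_succ]; have := eight_le_patternLen (f := f) k; positivity

theorem eight_mul_blockLen_le (k : ℕ) : 8 * blockLen f k ≤ blockLen f (k + 1) :=
  Nat.mul_le_mul_right _ (eight_le_patternLen k)

theorem le_blockLen (k : ℕ) : k ≤ blockLen f k := by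
  induction k with
  | zero => exact Nat.zero_le _
  | succ k ih =>
    have := eight_mul_blockLen_le (f := f) k
    have := blockLen_pos (f := f) k
    omega

theorem blockLen_dvd {m k : ℕ} (h : m ≤ k) : blockLen f m ∣ blockLen f k := by
  induction k, h using Nat.le_induction with
  | base => exact dvd_rfl
  | succ k _ ih => exact ih.trans (Dvd.intro_left _ (blockLen_succ k).symm)

theorem pattern_eq_false {x : Bool} {b : ℕ} (hb : 5 ≤ b) : pattern x b = false := by
  rcases b with _ | _ | _ | _ | _ | b <;> simp_all [pattern]

theorem pattern_true_eq_false {b : ℕ} (hb : 4 ≤ b) : pattern true b = false := by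
  rcases b with _ | _ | _ | _ | _ | b <;> simp_all [pattern]

theorem eq_zero_of_pattern {x : Bool} {b : ℕ} (h₀ : pattern x b = true)
    (h₁ : pattern x (b + 1) = true) : b = 0 := by
  rcases b with _ | _ | _ | _ | _ | b <;> cases x <;> simp_all [pattern]

theorem exists_pattern_eq (x y z : Bool) :
    ∃ b, b < 5 ∧ pattern z b = x ∧ pattern z (b + 1) = y := by
  revert x y z; decide

theorem letter_zero (m : ℕ) : letter f m 0 = true := by rw [letter, if_pos rfl]

theorem letter_eq (m s : ℕ) :
    letter f m s = pattern (letter f (m + 1) (s / patternLen f m)) (s % patternLen f m) := by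
  rcases Nat.eq_zero_or_pos s with rfl | hs
  · rw [letter_zero, Nat.zero_div, Nat.zero_mod]; rfl
  · rw [letter, if_neg hs.ne']

theorem letter_mul_add (m c : ℕ) {b : ℕ} (hb : b < patternLen f m) :
    letter f m (c * patternLen f m + b) = pattern (letter f (m + 1) c) b := by
  have hQ : 0 < patternLen f m := by have := eight_le_patternLen (f := f) m; omega
  rw [letter_eq, mul_comm, Nat.mul_add_div hQ, Nat.mul_add_mod, Nat.div_eq_of_lt hb,
    Nat.mod_eq_of_lt hb, add_zero]

theorem letter_mul (m c : ℕ) : letter f m (c * patternLen f m) = true :=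
  letter_mul_add (b := 0) m c (by have := eight_le_patternLen (f := f) m; omega)

theorem letter_of_lt (m : ℕ) {b : ℕ} (hb : b < patternLen f m) :
    letter f m b = pattern true b := by
  simpa [letter_zero] using letter_mul_add (f := f) m 0 hb

theorem exists_letter_eq_word (m : ℕ) :
    ∃ δ < blockLen f m, ∀ s, letter f m s = word f (s * blockLen f m + δ) := by
  induction m with
  | zero => exact ⟨0, Nat.one_pos, fun s => by simp [word, blockLen]⟩
  | succ m ih =>
    obtain ⟨δ, hδ, h⟩ := ih
    refine ⟨3 * blockLen f m + δ, by have := eight_mul_blockLen_le (f := f) m; omega, fun s => ?_⟩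
    -- `x` is the letter at position 3 of `σₘ (x)`
    calc letter f (m + 1) s = pattern (letter f (m + 1) s) 3 := rfl
      _ = letter f m (s * patternLen f m + 3) :=
        (letter_mul_add m s (by have := eight_le_patternLen (f := f) m; omega)).symm
      _ = word f (s * blockLen f (m + 1) + (3 * blockLen f m + δ)) := by
        rw [h, blockLen_succ]; ring_nf

theorem word_eq_of_letter_eq {m a b : ℕ} (h : letter f m a = letter f m b) {t : ℕ}
    (ht : t < blockLen f m) :
    word f (a * blockLen f m + t) = word f (b * blockLen f m + t) := by
  induction m generalizing a b t with
  | zero =>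
    obtain rfl : t = 0 := by simpa [blockLen] using ht
    simpa [word, blockLen] using h
  | succ m ih =>
    have hj : t / blockLen f m < patternLen f m :=
      Nat.div_lt_of_lt_mul (by rwa [mul_comm, ← blockLen_succ])
    have key := ih (a := a * patternLen f m + t / blockLen f m)
      (b := b * patternLen f m + t / blockLen f m)
      (by rw [letter_mul_add _ _ hj, letter_mul_add _ _ hj, h]) (Nat.mod_lt t (blockLen_pos m))
    rw [← Nat.div_add_mod' t (blockLen f m), blockLen_succ]
    convert key using 2 <;> ring

theorem letter_add_eq_iff {m a b n : ℕ} :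
    (∀ j < n, letter f m (a + j) = letter f m (b + j)) ↔
      ∀ u < n * blockLen f m, word f (a * blockLen f m + u) = word f (b * blockLen f m + u) := by
  constructor
  · intro h u hu
    have := word_eq_of_letter_eq
      (h (u / blockLen f m) (Nat.div_lt_of_lt_mul (by rwa [mul_comm])))
      (Nat.mod_lt u (blockLen_pos m))
    rwa [add_mul, add_mul, add_assoc, add_assoc, Nat.div_add_mod'] at this
  · intro h j hj
    obtain ⟨δ, hδ, hl⟩ := exists_letter_eq_word (f := f) m
    rw [hl, hl, add_mul, add_mul, add_assoc, add_assoc]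
    exact h _ (by nlinarith)

theorem patternLen_dvd_of_letter {m s : ℕ} (h₀ : letter f m s = true)
    (h₁ : letter f m (s + 1) = true) : patternLen f m ∣ s := by
  have h8 := eight_le_patternLen (f := f) m
  obtain ⟨c, b, hb, rfl⟩ : ∃ c b, b < patternLen f m ∧ s = c * patternLen f m + b :=
    ⟨_, _, Nat.mod_lt s (by omega), (Nat.div_add_mod' s _).symm⟩
  rw [letter_mul_add _ _ hb] at h₀
  obtain hb' | hb' : b + 1 < patternLen f m ∨ b + 1 = patternLen f m := by omega
  · rw [add_assoc, letter_mul_add _ _ hb'] at h₁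
    rw [eq_zero_of_pattern h₀ h₁, add_zero]
    exact Dvd.intro_left c rfl
  · rw [pattern_eq_false (by omega)] at h₀
    exact absurd h₀ Bool.false_ne_true

theorem blockLen_succ_dvd_of_dvd {k a t : ℕ} (ht : blockLen f k ∣ t)
    (h : ∀ u < 2 * blockLen f k, word f (t + u) = word f (a * blockLen f (k + 1) + u)) :
    blockLen f (k + 1) ∣ t := by
  obtain ⟨s, rfl⟩ := ht
  have hQ := eight_le_patternLen (f := f) k
  rw [blockLen_succ, ← mul_assoc, mul_comm (blockLen f k) s] at h
  have hl := letter_add_eq_iff.2 h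
  have h₀ : letter f k s = true := by simpa [letter_mul] using hl 0 (by omega)
  have h₁ : letter f k (s + 1) = true := by
    simpa [letter_mul_add _ _ (by omega : 1 < patternLen f k), pattern] using hl 1 (by omega)
  rw [blockLen_succ, mul_comm]
  exact Nat.mul_dvd_mul_left _ (patternLen_dvd_of_letter h₀ h₁)

theorem blockLen_succ_dvd {k a t : ℕ}
    (h : ∀ u < 2 * blockLen f k, word f (t + u) = word f (a * blockLen f (k + 1) + u)) :
    blockLen f (k + 1) ∣ t := by
  induction k generalizing a t with
  | zero => exact blockLen_succ_dvd_of_dvd (one_dvd t) h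
  | succ k ih =>
    refine blockLen_succ_dvd_of_dvd (ih (a := a * patternLen f (k + 1)) fun u hu => ?_) h
    rw [mul_assoc, ← blockLen_succ]
    exact h u (by have := eight_mul_blockLen_le (f := f) k; omega)

theorem letter_pred_ne_letter {m c : ℕ} (hc : 0 < c) :
    letter f m (c * patternLen f m - 1) ≠ letter f m (c * patternLen f m) := by
  have h8 := eight_le_patternLen (f := f) m
  obtain ⟨c, rfl⟩ : ∃ c', c = c' + 1 := ⟨c - 1, by omega⟩
  rw [show (c + 1) * patternLen f m - 1 = c * patternLen f m + (patternLen f m - 1) by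
      rw [add_one_mul]; omega,
    letter_mul_add _ _ (by omega), pattern_eq_false (by omega), letter_mul]
  exact Bool.false_ne_true

theorem blockLen_dvd_of_centred_square {k l : ℕ} (hl : 0 < l) (hlk : l ≤ 4 * blockLen f k)
    (hsq : ∀ t < l, word f (4 * blockLen f k - l + t) = word f (4 * blockLen f k + t))
    {m : ℕ} (hm : m ≤ k) : blockLen f m ∣ l := by
  induction m with
  | zero => exact one_dvd l
  | succ m ih =>
    obtain ⟨Λ, rfl⟩ := ih (by omega)
    obtain ⟨c, hc⟩ := blockLen_dvd (f := f) hm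
    have hq := blockLen_pos (f := f) m
    have hc0 : 0 < c := Nat.pos_of_mul_pos_left (hc ▸ blockLen_pos k)
    have hD : 4 * blockLen f k = 4 * c * blockLen f (m + 1) := by rw [hc]; ring
    obtain rfl | hΛ : Λ = 1 ∨ 2 ≤ Λ := by
      have := Nat.pos_of_mul_pos_left hl; omega
    · refine absurd ?_ (letter_pred_ne_letter (f := f) (m := m) (c := 4 * c) (by omega))
      have hD' : 4 * c * patternLen f m * blockLen f m = 4 * blockLen f k := by
        rw [hD, blockLen_succ]; ring
      simpa using letter_add_eq_iff.2 (fun u hu => by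
        rw [Nat.sub_one_mul, hD']; simpa using hsq u (by simpa using hu)) 0 one_pos
    · have hdvd := blockLen_succ_dvd (a := 4 * c) (t := 4 * blockLen f k - blockLen f m * Λ)
        fun u hu => by rw [← hD]; exact hsq u (by nlinarith)
      have hD_dvd : blockLen f (m + 1) ∣ 4 * blockLen f k := hD ▸ Dvd.intro_left (4 * c) rfl
      simpa [Nat.sub_sub_self hlk] using Nat.dvd_sub hD_dvd hdvd

theorem not_centred_square {k l : ℕ} (hl : 0 < l) (hlk : l ≤ 4 * blockLen f k) :
    ¬ ∀ t < l, word f (4 * blockLen f k - l + t) = word f (4 * blockLen f k + t) := by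
  intro hsq
  obtain ⟨Λ, rfl⟩ := blockLen_dvd_of_centred_square hl hlk hsq le_rfl
  have hq := blockLen_pos (f := f) k
  have h8 := eight_le_patternLen (f := f) k
  have hΛ : 0 < Λ ∧ Λ ≤ 4 :=
    ⟨Nat.pos_of_mul_pos_left hl, Nat.le_of_mul_le_mul_left (by linarith) hq⟩
  have hlet := letter_add_eq_iff (n := Λ) (a := 4 - Λ) (b := 4) |>.2 (fun u hu => by
      rw [Nat.sub_mul, mul_comm Λ]; exact hsq u (by linarith)) (Λ - 1) (by omega)
  rw [show 4 - Λ + (Λ - 1) = 3 by omega, letter_of_lt k (by omega),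
    letter_of_lt k (by omega : 4 + (Λ - 1) < patternLen f k),
    pattern_true_eq_false (b := 4 + (Λ - 1)) (by omega)] at hlet
  exact absurd hlet (by decide)

theorem blockLen_succ_le_of_recurrence {k l : ℕ} (hl : 0 < l)
    (h : ∀ t < 2 * blockLen f k, word f (l + t) = word f t) : blockLen f (k + 1) ≤ l :=
  Nat.le_of_dvd hl (blockLen_succ_dvd (a := 0) (by simpa using h))

theorem blockLen_succ_le_length {k : ℕ} {r : List Bool}
    (hr : IsRepWordAt (word f) (4 * blockLen f k) r) : blockLen f (k + 1) ≤ r.length := by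
  rcases hr.square_or_recurrence with ⟨hl, hlk, hsq⟩ | ⟨hlk, hrec⟩
  · exact absurd hsq (not_centred_square hl hlk)
  · exact blockLen_succ_le_of_recurrence (by have := blockLen_pos (f := f) k; omega)
      fun t ht => hrec t (by omega)

theorem uniformlyRecurrent_word : UniformlyRecurrent (word f) := by
  refine uniformlyRecurrent_of_forall_window fun n j₀ => ?_
  have hq := blockLen_pos (f := f) n
  have hQ := eight_le_patternLen (f := f) n
  obtain ⟨a, e, he, rfl⟩ : ∃ a e, e < blockLen f n ∧ j₀ = a * blockLen f n + e :=
    ⟨_, _, Nat.mod_lt j₀ hq, (Nat.div_add_mod' j₀ _).symm⟩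
  refine ⟨2 * blockLen f (n + 1), fun j => ?_⟩
  -- the pair of level-`n` letters around `j₀` also occurs inside the level-`(n + 1)` block `c`
  set c := j / blockLen f (n + 1) + 1
  obtain ⟨b, hb, hbx, hby⟩ :=
    exists_pattern_eq (letter f n a) (letter f n (a + 1)) (letter f (n + 1) c)
  have hpair : ∀ i < 2, letter f n (c * patternLen f n + b + i) = letter f n (a + i) := by
    intro i hi
    rw [add_assoc, letter_mul_add _ _ (by omega)]
    interval_cases i <;> assumption
  have hwin := letter_add_eq_iff.1 hpair
  have hj : j < c * blockLen f (n + 1) := by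
    rw [add_one_mul]; exact Nat.lt_div_mul_add (blockLen_pos _)
  have hc : c * blockLen f (n + 1) ≤ j + blockLen f (n + 1) := by
    rw [add_one_mul]; exact Nat.add_le_add_right (Nat.div_mul_le_self _ _) _
  have hstart :
      (c * patternLen f n + b) * blockLen f n = c * blockLen f (n + 1) + b * blockLen f n := by
    rw [blockLen_succ]; ring
  have hb' : b * blockLen f n + e < blockLen f (n + 1) := by
    rw [blockLen_succ]; nlinarith
  refine ⟨(c * patternLen f n + b) * blockLen f n + e, by omega, by omega, fun i hi => ?_⟩
  rw [add_assoc, add_assoc]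
  exact hwin _ (by have := le_blockLen (f := f) n; omega)

end LargeLocalPeriod

open LargeLocalPeriod

/-- For every `f : ℕ → ℕ` there is a uniformly recurrent infinite word `u`
over a two-letter alphabet with `h_u(d) > f(d)` for infinitely many positive integers `d`. -/
theorem exists_uniformlyRecurrent_pcomplexity_gt
    (f : ℕ → ℕ) :
    ∃ u : ℕ → Bool, UniformlyRecurrent u ∧
      ∀ N : ℕ, ∃ d : ℕ, N ≤ d ∧ 1 ≤ d ∧ (f d : ℝ≥0∞) < pcomplexity u d := by
  refine ⟨word f, uniformlyRecurrent_word, fun N => ?_⟩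
  have hq := blockLen_pos (f := f) N
  refine ⟨4 * blockLen f N, by have := le_blockLen (f := f) N; omega, by omega, ?_⟩
  refine natCast_lt_pcomplexity (by omega)
    (le_trans ?_ (le_localPeriod fun r hr => blockLen_succ_le_length hr))
  rw [Nat.cast_le, blockLen_succ, patternLen]
  nlinarith
end

section
/- Let u be an infinite uniformly recurrent word, let w be a finite factor of u whose period p(w) is greater than |v| for some nonempty finite word v, and let m be the maximal return time of w in u (so that every factor of u of length m + |w| contains an occurrence of w). Then for every integer e such that v^e is a factor of u, one has |v^e| = e·|v| < m + |w|. -/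
open scoped BigOperators ENNReal

open PeriodicityComplexity

/-!
If `v^e` is at least as long as `m + |w|`, pick an occurrence of `v^e` that has an occurrence
of `w` somewhere before it (uniform recurrence). Since consecutive occurrences of `w` are at most
`m` apart, `w` occurs within the first `m` positions of `v^e`, hence inside `v^e`; so `w` inherits
the period `|v|` of `v^e`, contradicting `p(w) > |v|`.
-/

namespace PeriodicityComplexity

variable {A : Type*} {u : ℕ → A} {z : List A}

theorem OccursAt.getElem? {j : ℕ} (h : OccursAt u z j) {i : ℕ} (hi : i < z.length) :
    z[i]? = some (u (j + i)) := by
  rw [h]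
  simp [hi]

theorem occursAt_ofFn (u : ℕ → A) (j n : ℕ) :
    OccursAt u (List.ofFn fun t : Fin n => u (j + t)) j := by
  unfold OccursAt
  apply List.ext_getElem <;> simp

theorem length_wpow (v : List A) (e : ℕ) : (wpow v e).length = e * v.length := by
  simp [wpow]

theorem wpow_succ (v : List A) (e : ℕ) : wpow v (e + 1) = v ++ wpow v e := by
  simp [wpow, List.replicate_succ]

theorem wpow_succ' (v : List A) (e : ℕ) : wpow v (e + 1) = wpow v e ++ v := by
  simp [wpow, List.replicate_succ']

theorem hasPeriodF_wpow (v : List A) : ∀ e, HasPeriodF (wpow v e) v.length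
  | 0, t, ht => by simp [length_wpow] at ht
  | e + 1, t, ht => by
    have ht' : t < (wpow v e).length := by
      rw [length_wpow, add_mul] at ht
      rw [length_wpow]
      omega
    calc (wpow v (e + 1))[t]? = (wpow v e)[t]? := by
          rw [wpow_succ', List.getElem?_append_left ht']
      _ = (wpow v (e + 1))[t + v.length]? := by
          rw [wpow_succ, List.getElem?_append_right (by omega), Nat.add_sub_cancel]

theorem HasPeriodF.of_occursAt {y : List A} {p i j : ℕ} (hy : HasPeriodF y p)
    (hoy : OccursAt u y i) (hoz : OccursAt u z j) (hij : i ≤ j)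
    (hzy : j + z.length ≤ i + y.length) : HasPeriodF z p := by
  intro t ht
  have h := hy (j - i + t) (by omega)
  rw [hoy.getElem? (by omega), hoy.getElem? (by omega)] at h
  rw [hoz.getElem? (by omega), hoz.getElem? ht]
  convert h using 3 <;> omega

theorem periodF_le {p : ℕ} (hp : 1 ≤ p) (h : HasPeriodF z p) : periodF z ≤ p :=
  Nat.sInf_le ⟨hp, h⟩

theorem isReturnLength_of_consecutive {i k : ℕ} (hi : OccursAt u z i) (hk : OccursAt u z k)
    (hik : i < k) (hgap : ∀ t, i < t → t < k → ¬ OccursAt u z t) :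
    IsReturnLength u z (k - i) := by
  have hlen : (List.ofFn fun t : Fin (k - i) => u (i + t)).length = k - i := List.length_ofFn
  refine ⟨_, ⟨?_, i, hi, ?_, ?_, occursAt_ofFn u i (k - i)⟩, hlen⟩
  · rw [← List.length_pos_iff, hlen]
    omega
  · rwa [hlen, Nat.add_sub_cancel' hik.le]
  · rw [hlen, Nat.add_sub_cancel' hik.le]
    exact hgap

theorem UniformlyRecurrent.exists_occursAt_ge (hu : UniformlyRecurrent u) (hz : IsFactor u z)
    (j : ℕ) : ∃ t, j ≤ t ∧ OccursAt u z t := by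
  obtain ⟨N, hN⟩ := hu z hz
  obtain ⟨t, hjt, -, ht⟩ := hN j
  exact ⟨t, hjt, ht⟩

theorem UniformlyRecurrent.bddAbove_returnLength (hu : UniformlyRecurrent u)
    (hz : IsFactor u z) : BddAbove {l | IsReturnLength u z l} := by
  obtain ⟨N, hN⟩ := hu z hz
  refine ⟨N, ?_⟩
  rintro _ ⟨r, ⟨-, j, -, -, hgap, -⟩, rfl⟩
  obtain ⟨t, hjt, htN, ht⟩ := hN (j + 1)
  by_contra! hlong
  exact hgap t (by omega) (by omega) ht

theorem exists_occursAt_mem_Icc (hb : BddAbove {l | IsReturnLength u z l}) {i j k : ℕ}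
    (hi : OccursAt u z i) (hij : i ≤ j) (hk : OccursAt u z k) (hjk : j ≤ k) :
    ∃ t, j ≤ t ∧ t ≤ j + maxReturnTime u z ∧ OccursAt u z t := by
  classical
  have hex : ∃ t, j ≤ t ∧ OccursAt u z t := ⟨k, hjk, hk⟩
  obtain ⟨hjnext, hnext⟩ := Nat.find_spec hex
  set next := Nat.find hex
  rcases hjnext.eq_or_lt with hjeq | hjlt
  · exact ⟨next, hjnext, by omega, hnext⟩
  set prev := Nat.findGreatest (OccursAt u z) (next - 1)
  have hprev : OccursAt u z prev := Nat.findGreatest_spec (m := i) (by omega) hi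
  have hprev_lt : prev < j := by
    by_contra! h
    have := Nat.find_min' hex ⟨h, hprev⟩
    have := Nat.findGreatest_le (P := OccursAt u z) (next - 1)
    omega
  have hgap : ∀ t, prev < t → t < next → ¬ OccursAt u z t := fun t hpt htn =>
    Nat.findGreatest_is_greatest hpt (by omega)
  have : next - prev ≤ maxReturnTime u z :=
    le_csSup hb (isReturnLength_of_consecutive hprev hnext (by omega) hgap)
  exact ⟨next, hjnext, by omega, hnext⟩

end PeriodicityComplexity

/-- Let `u` be uniformly recurrent, `w` a finite factor of `u` whose period
exceeds `|v|` for a nonempty finite word `v`, and let `m` be the maximal return time of `w`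
in `u`. Then every `e` with `v^e` a factor of `u` satisfies `e·|v| < m + |w|`. -/
theorem pow_length_lt_of_period_gt
    {A : Type*} (u : ℕ → A) (hur : UniformlyRecurrent u)
    (w v : List A) (hw : IsFactor u w) (hv : v ≠ [])
    (hp : v.length < periodF w)
    (m : ℕ) (hm : m = maxReturnTime u w) :
    ∀ e : ℕ, IsFactor u (wpow v e) → e * v.length < m + w.length := by
  subst hm
  intro e hve
  by_contra! hlong
  obtain ⟨i, hi⟩ := hw
  obtain ⟨j, hij, hj⟩ := hur.exists_occursAt_ge hve i
  obtain ⟨k, hjk, hk⟩ := hur.exists_occursAt_ge ⟨i, hi⟩ j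
  obtain ⟨t, hjt, htj, ht⟩ :=
    exists_occursAt_mem_Icc (hur.bddAbove_returnLength ⟨i, hi⟩) hi hij hk hjk
  have hper : HasPeriodF w v.length :=
    (hasPeriodF_wpow v e).of_occursAt hj ht hjt (by rw [length_wpow]; omega)
  have := periodF_le (List.length_pos_iff.mpr hv) hper
  omega
end
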